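/- arXiv:1810.03315 — 3 statements merged into one kernel-verified Lean document; each statement's English description precedes it below -/
import Mathlib

section
/- Let n, m be natural numbers, A an invertible real n×n matrix, B a real m×n matrix, M an invertible real m×m matrix, and γ > 0 a real number. Set X := B·A⁻¹·Bᵀ and assume X and M + γ·X are invertible. Then the augmented matrix A_γ := A + γ·Bᵀ·M⁻¹·B is invertible, the Schur complement S := −B·A_γ⁻¹·Bᵀ of the augmented saddle point matrix is invertible, and its inverse satisfies the exact identity S⁻¹ = −(B·A⁻¹·Bᵀ)⁻¹ − γ·M⁻¹. -/
/-!
Write `A_γ = A + U C V` with `U = Bᵀ`, `C = γ M⁻¹`, `V = B`, and `X = V A⁻¹ U`. Invertibility of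
`A_γ` follows from `det (1 + A⁻¹ U C V) = det (1 + C X) = det (M⁻¹ (M + γ X))`. The resolvent
identity `A⁻¹ = A_γ⁻¹ + A⁻¹ U C V A_γ⁻¹`, compressed by `V` and `U`, gives `X = Y + X C Y` for
`Y = V A_γ⁻¹ U = -S`, i.e. `(X⁻¹ + C) Y = 1`, so `S⁻¹ = -X⁻¹ - C`.
-/

open Matrix

namespace Matrix

variable {m n R : Type*} [Fintype m] [Fintype n] [DecidableEq n] [CommRing R]

theorem inv_eq_inv_add_add_inv_mul_mul_inv {A D : Matrix n n R} (hA : IsUnit A)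
    (hAD : IsUnit (A + D)) : A⁻¹ = (A + D)⁻¹ + A⁻¹ * D * (A + D)⁻¹ :=
  calc A⁻¹ = A⁻¹ * (A + D) * (A + D)⁻¹ := by
        rw [Matrix.mul_assoc, mul_nonsing_inv _ ((isUnit_iff_isUnit_det _).mp hAD),
          Matrix.mul_one]
    _ = _ := by
        rw [Matrix.mul_add, nonsing_inv_mul _ ((isUnit_iff_isUnit_det _).mp hA), Matrix.add_mul,
          Matrix.one_mul]

variable [DecidableEq m]

theorem isUnit_add_mul_mul {A : Matrix n n R} {U : Matrix n m R} {C : Matrix m m R}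
    {V : Matrix m n R} (hA : IsUnit A) (h : IsUnit (1 + C * (V * A⁻¹ * U))) :
    IsUnit (A + U * C * V) := by
  have hfactor : A + U * C * V = A * (1 + A⁻¹ * U * (C * V)) := by
    rw [Matrix.mul_add, Matrix.mul_one, ← Matrix.mul_assoc, ← Matrix.mul_assoc,
      mul_nonsing_inv_cancel_left _ _ ((isUnit_iff_isUnit_det A).mp hA)]
  rw [hfactor, isUnit_iff_isUnit_det, det_mul, det_one_add_mul_comm]
  refine ((isUnit_iff_isUnit_det A).mp hA).mul ?_
  simpa only [Matrix.mul_assoc] using (isUnit_iff_isUnit_det _).mp h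

theorem left_inv_mul_inv_add_mul_mul_mul {A : Matrix n n R} {U : Matrix n m R}
    {C : Matrix m m R} {V : Matrix m n R} (hA : IsUnit A) (hAUCV : IsUnit (A + U * C * V))
    (hX : IsUnit (V * A⁻¹ * U)) :
    ((V * A⁻¹ * U)⁻¹ + C) * (V * (A + U * C * V)⁻¹ * U) = 1 := by
  have hcompress : V * A⁻¹ * U = V * (A + U * C * V)⁻¹ * U
      + V * A⁻¹ * U * C * (V * (A + U * C * V)⁻¹ * U) := by
    conv_lhs => rw [inv_eq_inv_add_add_inv_mul_mul_inv hA hAUCV]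
    simp only [Matrix.mul_add, Matrix.add_mul, Matrix.mul_assoc]
  generalize V * A⁻¹ * U = X at hX hcompress ⊢
  generalize V * (A + U * C * V)⁻¹ * U = Y at hcompress ⊢
  have hXX : X⁻¹ * X = 1 := nonsing_inv_mul _ ((isUnit_iff_isUnit_det _).mp hX)
  calc (X⁻¹ + C) * Y = X⁻¹ * (Y + X * C * Y) := by
        rw [Matrix.add_mul, Matrix.mul_add, Matrix.mul_assoc X, ← Matrix.mul_assoc X⁻¹, hXX,
          Matrix.one_mul]
    _ = 1 := by rw [← hcompress, hXX]

end Matrix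

theorem stmt_2_general (n m : ℕ) (A : Matrix (Fin n) (Fin n) ℝ)
    (B : Matrix (Fin m) (Fin n) ℝ) (M : Matrix (Fin m) (Fin m) ℝ)
    (γ : ℝ) (hA : IsUnit A) (hM : IsUnit M)
    (hX : IsUnit (B * A⁻¹ * Bᵀ)) (hMX : IsUnit (M + γ • (B * A⁻¹ * Bᵀ))) :
    IsUnit (A + γ • (Bᵀ * M⁻¹ * B)) ∧
      IsUnit (-(B * (A + γ • (Bᵀ * M⁻¹ * B))⁻¹ * Bᵀ)) ∧
      (-(B * (A + γ • (Bᵀ * M⁻¹ * B))⁻¹ * Bᵀ))⁻¹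
        = -(B * A⁻¹ * Bᵀ)⁻¹ - γ • M⁻¹ := by
  have hsmul : γ • (Bᵀ * M⁻¹ * B) = Bᵀ * (γ • M⁻¹) * B := by
    rw [Matrix.mul_smul, Matrix.smul_mul]
  have hfactor : 1 + γ • M⁻¹ * (B * A⁻¹ * Bᵀ) = M⁻¹ * (M + γ • (B * A⁻¹ * Bᵀ)) := by
    rw [Matrix.mul_add, nonsing_inv_mul _ ((isUnit_iff_isUnit_det M).mp hM), Matrix.mul_smul,
      Matrix.smul_mul]
  rw [hsmul]
  have hAγ : IsUnit (A + Bᵀ * (γ • M⁻¹) * B) := by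
    refine isUnit_add_mul_mul hA ?_
    rw [hfactor]
    exact (isUnit_nonsing_inv_iff.mpr hM).mul hMX
  have hinv : (-(B * A⁻¹ * Bᵀ)⁻¹ - γ • M⁻¹) * -(B * (A + Bᵀ * (γ • M⁻¹) * B)⁻¹ * Bᵀ) = 1 := by
    rw [← neg_add', neg_mul_neg]
    exact left_inv_mul_inv_add_mul_mul_mul hA hAγ hX
  exact ⟨hAγ, IsUnit.of_mul_eq_one_right _ hinv, inv_eq_left_inv hinv⟩

/-- The Schur complement `S = -B A_γ⁻¹ Bᵀ` of the augmented saddle point matrix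
is invertible with `S⁻¹ = -(B A⁻¹ Bᵀ)⁻¹ - γ M⁻¹`. -/
theorem stmt_2 (n m : ℕ) (A : Matrix (Fin n) (Fin n) ℝ)
    (B : Matrix (Fin m) (Fin n) ℝ) (M : Matrix (Fin m) (Fin m) ℝ)
    (γ : ℝ) (hγ : 0 < γ) (hA : IsUnit A) (hM : IsUnit M)
    (hX : IsUnit (B * A⁻¹ * Bᵀ)) (hMX : IsUnit (M + γ • (B * A⁻¹ * Bᵀ))) :
    IsUnit (A + γ • (Bᵀ * M⁻¹ * B)) ∧
      IsUnit (-(B * (A + γ • (Bᵀ * M⁻¹ * B))⁻¹ * Bᵀ)) ∧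
      (-(B * (A + γ • (Bᵀ * M⁻¹ * B))⁻¹ * Bᵀ))⁻¹
        = -(B * A⁻¹ * Bᵀ)⁻¹ - γ • M⁻¹ :=
  stmt_2_general n m A B M γ hA hM hX hMX
end

section
/- Let n, m be natural numbers with m ≤ n, let A be a real symmetric positive definite n×n matrix, M a real symmetric positive definite m×m matrix, and B a real m×n matrix of full row rank m. Then for every γ > 0 the augmented matrix A_γ := A + γ·Bᵀ·M⁻¹·B is invertible, the Schur complement S_γ := −B·A_γ⁻¹·Bᵀ is invertible, and γ⁻¹·S_γ⁻¹ converges to −M⁻¹ as γ → ∞; that is, the approximation S_γ⁻¹ ≈ −(ν + γ)·M⁻¹ of the Schur complement inverse becomes exact to leading order in γ as γ increases. -/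
open Matrix Filter

/-!
With `C := B A⁻¹ Bᵀ`, which is positive definite because `A⁻¹` is and `Bᵀ` is injective,
one checks directly that `A_γ A⁻¹ Bᵀ C⁻¹ = Bᵀ (C⁻¹ + γ M⁻¹)`; multiplying by `B A_γ⁻¹` on the
left gives `(B A_γ⁻¹ Bᵀ)⁻¹ = C⁻¹ + γ M⁻¹`. Hence `γ⁻¹ S_γ⁻¹ = -(γ⁻¹ C⁻¹ + M⁻¹) → -M⁻¹`.
-/

namespace Matrix

variable {m n K : Type*} [Fintype m] [Fintype n] [Field K]

theorem vecMul_injective_of_rank_eq_card {B : Matrix m n K} (hB : B.rank = Fintype.card m) :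
    Function.Injective B.vecMul := by
  rw [vecMul_injective_iff, linearIndependent_iff_card_eq_finrank_span, ← hB,
    rank_eq_finrank_span_row, Set.finrank]

variable [DecidableEq m] [DecidableEq n]

theorem mul_inv_add_smul_mul_mul_mul_eq_one {A : Matrix n n K} {U : Matrix n m K}
    (N : Matrix m m K) {V : Matrix m n K} (γ : K) (hA : IsUnit A)
    (hAγ : IsUnit (A + γ • (U * N * V))) (hC : IsUnit (V * A⁻¹ * U)) :
    V * (A + γ • (U * N * V))⁻¹ * U * ((V * A⁻¹ * U)⁻¹ + γ • N) = 1 := by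
  rw [isUnit_iff_isUnit_det] at hA hAγ hC
  set C := V * A⁻¹ * U with hC_def
  set Aγ := A + γ • (U * N * V) with hAγ_def
  have key : Aγ * (A⁻¹ * U * C⁻¹) = U * (C⁻¹ + γ • N) := calc
    Aγ * (A⁻¹ * U * C⁻¹) = U * C⁻¹ + γ • (U * N * (C * C⁻¹)) := by
      rw [hAγ_def, hC_def, Matrix.add_mul, Matrix.smul_mul]
      simp only [Matrix.mul_assoc, mul_nonsing_inv_cancel_left _ _ hA]
    _ = U * (C⁻¹ + γ • N) := by
      rw [mul_nonsing_inv _ hC, Matrix.mul_one, Matrix.mul_add, Matrix.mul_smul]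
  calc V * Aγ⁻¹ * U * (C⁻¹ + γ • N) = V * (Aγ⁻¹ * (Aγ * (A⁻¹ * U * C⁻¹))) := by
        rw [key]; simp only [Matrix.mul_assoc]
    _ = C * C⁻¹ := by
        rw [nonsing_inv_mul_cancel_left _ _ hAγ, hC_def]; simp only [Matrix.mul_assoc]
    _ = 1 := mul_nonsing_inv _ hC

end Matrix

theorem tendsto_inv_smul_add_smul_atTop {E : Type*} [AddCommGroup E] [Module ℝ E]
    [TopologicalSpace E] [ContinuousAdd E] [ContinuousSMul ℝ E] (c v : E) :
    Tendsto (fun γ : ℝ => γ⁻¹ • (c + γ • v)) atTop (nhds v) := by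
  have h : Tendsto (fun γ : ℝ => γ⁻¹ • c + v) atTop (nhds v) := by
    simpa using ((tendsto_inv_atTop_zero (𝕜 := ℝ)).smul_const c).add_const v
  refine h.congr' ?_
  filter_upwards [eventually_ne_atTop 0] with γ hγ
  rw [smul_add, smul_smul, inv_mul_cancel₀ hγ, one_smul]

theorem stmt_3_general (n m : ℕ)
    (A : Matrix (Fin n) (Fin n) ℝ) (M : Matrix (Fin m) (Fin m) ℝ)
    (B : Matrix (Fin m) (Fin n) ℝ)
    (hA : A.PosDef) (hM : M.PosDef) (hB : B.rank = m) :
    (∀ γ : ℝ, 0 < γ →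
        IsUnit (A + γ • (Bᵀ * M⁻¹ * B)) ∧
          IsUnit (-(B * (A + γ • (Bᵀ * M⁻¹ * B))⁻¹ * Bᵀ))) ∧
      Tendsto (fun γ : ℝ => γ⁻¹ • (-(B * (A + γ • (Bᵀ * M⁻¹ * B))⁻¹ * Bᵀ))⁻¹)
        atTop (nhds (-M⁻¹)) := by
  have hC : (B * A⁻¹ * Bᵀ).PosDef := by
    simpa using hA.inv.mul_mul_conjTranspose_same
      (vecMul_injective_of_rank_eq_card (by simpa using hB))
  have hAγ (γ : ℝ) (hγ : 0 < γ) : (A + γ • (Bᵀ * M⁻¹ * B)).PosDef := by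
    simpa using hA.add_posSemidef ((hM.inv.posSemidef.conjTranspose_mul_mul_same B).smul hγ.le)
  have hS (γ : ℝ) (hγ : 0 < γ) :
      -(B * (A + γ • (Bᵀ * M⁻¹ * B))⁻¹ * Bᵀ) * -((B * A⁻¹ * Bᵀ)⁻¹ + γ • M⁻¹) = 1 := by
    rw [neg_mul_neg]
    exact mul_inv_add_smul_mul_mul_mul_eq_one _ _ hA.isUnit (hAγ γ hγ).isUnit hC.isUnit
  refine ⟨fun γ hγ => ⟨(hAγ γ hγ).isUnit, ?_⟩, ?_⟩
  · exact (isUnit_iff_isUnit_det _).mpr (isUnit_det_of_right_inverse (hS γ hγ))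
  · have h := (tendsto_inv_smul_add_smul_atTop (B * A⁻¹ * Bᵀ)⁻¹ M⁻¹).neg
    refine h.congr' ?_
    filter_upwards [eventually_gt_atTop 0] with γ hγ
    rw [inv_eq_right_inv (hS γ hγ), smul_neg]

/-- For SPD `A` and `M` and full-row-rank `B`, for every `γ > 0` the augmented
matrix `A_γ = A + γ Bᵀ M⁻¹ B` and the Schur complement `S_γ = -B A_γ⁻¹ Bᵀ`
are invertible, and `γ⁻¹ S_γ⁻¹ → -M⁻¹` as `γ → ∞`. -/
theorem stmt_3 (n m : ℕ) (hmn : m ≤ n)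
    (A : Matrix (Fin n) (Fin n) ℝ) (M : Matrix (Fin m) (Fin m) ℝ)
    (B : Matrix (Fin m) (Fin n) ℝ)
    (hA : A.PosDef) (hM : M.PosDef) (hB : B.rank = m) :
    (∀ γ : ℝ, 0 < γ →
        IsUnit (A + γ • (Bᵀ * M⁻¹ * B)) ∧
          IsUnit (-(B * (A + γ • (Bᵀ * M⁻¹ * B))⁻¹ * Bᵀ))) ∧
      Tendsto (fun γ : ℝ => γ⁻¹ • (-(B * (A + γ • (Bᵀ * M⁻¹ * B))⁻¹ * Bᵀ))⁻¹)
        atTop (nhds (-M⁻¹)) :=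
  stmt_3_general n m A M B hA hM hB
end

section
/- Let T ⊂ ℝ² be the reference triangle with vertices (0,0), (1,0), (0,1), and let B(x, y) = 27·x·y·(1 − x − y) be its cubic bubble normalized to 1 at the barycenter. Consider the uniform refinement of T into the four subtriangles T₀ = conv{(½,0), (0,½), (½,½)} (the middle triangle), T₁ = conv{(0,0), (½,0), (0,½)}, T₂ = conv{(1,0), (½,0), (½,½)}, T₃ = conv{(0,1), (0,½), (½,½)}, and for each i let B_i = 27·μ₁·μ₂·μ₃ be the bubble of T_i (with μ₁, μ₂, μ₃ the barycentric coordinates of T_i), normalized to 1 at the barycenter of T_i. Then: (a) the coarse bubble takes value 1 at the barycenter of the middle subtriangle and value ½ at the barycenters of the three corner subtriangles, i.e. B(1/3, 1/3) = 1 and B(1/6, 1/6) = B(2/3, 1/6) = B(1/6, 2/3) = ½; and (b) the interpolant built from the fine bubbles with these coefficients loses 3/8 of the integral: ∫_{T₀} B₀ + ½·(∫_{T₁} B₁ + ∫_{T₂} B₂ + ∫_{T₃} B₃) = (5/8)·∫_T B. -/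
/-!
Each fine bubble is the coarse bubble pulled back by the homothety that maps its subtriangle onto
`T`: ratio `2` centred at the shared vertex for a corner triangle, ratio `-2` centred at the
barycenter `(1/3, 1/3)` for the middle one. A homothety of ratio `±2` scales planar area by `4`,
so every fine integral equals `¼ ∫_T B`, and `¼ + ½ · 3 · ¼ = 5/8`.
-/

open MeasureTheory AffineMap

theorem hasFDerivAt_homothety {E : Type*} [NormedAddCommGroup E] [NormedSpace ℝ E] (c : E)
    (r : ℝ) (x : E) : HasFDerivAt (homothety c r) (r • ContinuousLinearMap.id ℝ E) x := by
  have : ⇑(homothety c r) = fun y => r • (y - c) + c := funext fun y => homothety_apply c r y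
  rw [this]
  exact (((hasFDerivAt_id x).sub_const c).const_smul r).add_const c

section

variable {E F : Type*} [NormedAddCommGroup E] [NormedSpace ℝ E] [MeasurableSpace E]
  [BorelSpace E] [FiniteDimensional ℝ E] (μ : Measure E) [μ.IsAddHaarMeasure]
  [NormedAddCommGroup F] [NormedSpace ℝ F]

theorem setIntegral_image_homothety (c : E) {r : ℝ} (hr : r ≠ 0) {s : Set E}
    (hs : MeasurableSet s) (f : E → F) :
    ∫ x in homothety c r '' s, f x ∂μ
      = |r ^ Module.finrank ℝ E| • ∫ x in s, f (homothety c r x) ∂μ := by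
  rw [integral_image_eq_integral_abs_det_fderiv_smul μ hs
    (fun x _ => (hasFDerivAt_homothety c r x).hasFDerivWithinAt)
    (homothety_injective c hr).injOn, integral_smul]
  simp [ContinuousLinearMap.det, LinearMap.det_smul]

theorem setIntegral_convexHull_comp_homothety (c : E) {r : ℝ} (hr : r ≠ 0) {s : Set E}
    (hs : s.Finite) (f : E → F) :
    ∫ x in convexHull ℝ s, f (homothety c r x) ∂μ
      = |r ^ Module.finrank ℝ E|⁻¹ • ∫ x in convexHull ℝ (homothety c r '' s), f x ∂μ := by
  rw [← AffineMap.image_convexHull, setIntegral_image_homothety μ c hr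
    (hs.isCompact_convexHull ℝ).measurableSet, inv_smul_smul₀ (abs_ne_zero.2 (pow_ne_zero _ hr))]

end

theorem setIntegral_convexHull_prod_comp_homothety_of_abs_eq_two {f g : ℝ × ℝ → ℝ}
    (c : ℝ × ℝ) (r : ℝ) (hr : |r| = 2) {s t : Set (ℝ × ℝ)} (hs : s.Finite)
    (hst : homothety c r '' s = t)
    (hf : ∀ x y, f (x, y) = g (r * (x - c.1) + c.1, r * (y - c.2) + c.2)) :
    ∫ z in convexHull ℝ s, f z = 1 / 4 * ∫ z in convexHull ℝ t, g z := by
  have hr0 : r ≠ 0 := by rintro rfl; norm_num at hr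
  have hfg : f = fun z => g (homothety c r z) := funext fun z => hf z.1 z.2
  rw [hfg, setIntegral_convexHull_comp_homothety volume c hr0 hs, hst, smul_eq_mul]
  norm_num [abs_pow, hr]

/-- (a) The coarse cubic bubble of the reference triangle takes value `1` at
the barycenter of the middle subtriangle of the uniform refinement and value
`½` at the barycenters of the three corner subtriangles; (b) the interpolant
built from the fine-grid bubbles with these coefficients retains exactly `5/8`
of the integral of the coarse bubble.  Here `B` is the coarse bubble and
`B₀, B₁, B₂, B₃` are the bubbles of the four subtriangles (27 times the
product of the respective barycentric coordinates, normalized to `1` at the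
barycenters). -/
theorem stmt_11
    (B B₀ B₁ B₂ B₃ : ℝ → ℝ → ℝ)
    -- coarse bubble of T = conv{(0,0),(1,0),(0,1)}
    (hB : ∀ x y, B x y = 27 * (x * y * (1 - x - y)))
    -- bubble of the middle subtriangle T₀ = conv{(½,0),(0,½),(½,½)},
    -- whose barycentric coordinates are 1−2y, 1−2x, 2x+2y−1
    (hB₀ : ∀ x y, B₀ x y = 27 * ((1 - 2*y) * (1 - 2*x) * (2*x + 2*y - 1)))
    -- bubble of T₁ = conv{(0,0),(½,0),(0,½)}, barycentric coords 1−2x−2y, 2x, 2y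
    (hB₁ : ∀ x y, B₁ x y = 27 * ((1 - 2*x - 2*y) * (2*x) * (2*y)))
    -- bubble of T₂ = conv{(1,0),(½,0),(½,½)}, barycentric coords 2x−1, 2−2x−2y, 2y
    (hB₂ : ∀ x y, B₂ x y = 27 * ((2*x - 1) * (2 - 2*x - 2*y) * (2*y)))
    -- bubble of T₃ = conv{(0,1),(0,½),(½,½)}, barycentric coords 2y−1, 2−2x−2y, 2x
    (hB₃ : ∀ x y, B₃ x y = 27 * ((2*y - 1) * (2 - 2*x - 2*y) * (2*x))) :
    -- (a) values of the coarse bubble at the barycenters of the subtriangles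
    (B (1/3) (1/3) = 1 ∧ B (1/6) (1/6) = 1/2 ∧ B (2/3) (1/6) = 1/2 ∧
      B (1/6) (2/3) = 1/2) ∧
    -- (b) the interpolant loses 3/8 of the integral
    ((∫ z in convexHull ℝ ({(1/2, 0), (0, 1/2), (1/2, 1/2)} : Set (ℝ × ℝ)),
          B₀ z.1 z.2)
      + (1/2) *
        ((∫ z in convexHull ℝ ({(0, 0), (1/2, 0), (0, 1/2)} : Set (ℝ × ℝ)),
            B₁ z.1 z.2)
          + (∫ z in convexHull ℝ ({(1, 0), (1/2, 0), (1/2, 1/2)} : Set (ℝ × ℝ)),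
              B₂ z.1 z.2)
          + (∫ z in convexHull ℝ ({(0, 1), (0, 1/2), (1/2, 1/2)} : Set (ℝ × ℝ)),
              B₃ z.1 z.2))
      = (5/8) *
          ∫ z in convexHull ℝ ({(0, 0), (1, 0), (0, 1)} : Set (ℝ × ℝ)),
            B z.1 z.2) := by
  refine ⟨by norm_num [hB], ?_⟩
  set T := convexHull ℝ ({(0, 0), (1, 0), (0, 1)} : Set (ℝ × ℝ))
  have h₀ : ∫ z in convexHull ℝ {(1/2, 0), (0, 1/2), (1/2, 1/2)}, B₀ z.1 z.2
      = 1/4 * ∫ z in T, B z.1 z.2 :=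
    setIntegral_convexHull_prod_comp_homothety_of_abs_eq_two (1/3, 1/3) (-2) (by norm_num)
      (Set.toFinite _) (by ext; norm_num [homothety_apply, Set.image_insert_eq]; tauto)
      (fun x y => by simp only [hB₀, hB]; ring)
  have h₁ : ∫ z in convexHull ℝ {(0, 0), (1/2, 0), (0, 1/2)}, B₁ z.1 z.2
      = 1/4 * ∫ z in T, B z.1 z.2 :=
    setIntegral_convexHull_prod_comp_homothety_of_abs_eq_two (0, 0) 2 (by norm_num)
      (Set.toFinite _) (by ext; norm_num [homothety_apply, Set.image_insert_eq])
      (fun x y => by simp only [hB₁, hB]; ring)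
  have h₂ : ∫ z in convexHull ℝ {(1, 0), (1/2, 0), (1/2, 1/2)}, B₂ z.1 z.2
      = 1/4 * ∫ z in T, B z.1 z.2 :=
    setIntegral_convexHull_prod_comp_homothety_of_abs_eq_two (1, 0) 2 (by norm_num)
      (Set.toFinite _) (by ext; norm_num [homothety_apply, Set.image_insert_eq]; tauto)
      (fun x y => by simp only [hB₂, hB]; ring)
  have h₃ : ∫ z in convexHull ℝ {(0, 1), (0, 1/2), (1/2, 1/2)}, B₃ z.1 z.2
      = 1/4 * ∫ z in T, B z.1 z.2 :=
    setIntegral_convexHull_prod_comp_homothety_of_abs_eq_two (0, 1) 2 (by norm_num)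
      (Set.toFinite _) (by ext; norm_num [homothety_apply, Set.image_insert_eq]; tauto)
      (fun x y => by simp only [hB₃, hB]; ring)
  rw [h₀, h₁, h₂, h₃]
  ring
end
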